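/- arXiv:2310.17832 — 2 statements merged into one kernel-verified Lean document; each statement's English description precedes it below -/
import Mathlib

section
/- For the rotlet-above-a-wall velocity field u_w = (u_w, v_w) with u_w = γ(-(y-y_r)/r² - (y-y_im)/r_im² - 2(y-w)/r_im² + 4(y-w)(y-y_im)²/r_im⁴) and v_w = γ((x-x_r)/r² - (x-x_r)/r_im² - 4(y-w)(x-x_im)(y-y_im)/r_im⁴), where x_im = x_r, y_im = 2w - y_r, r² = (x-x_r)²+(y-y_r)², r_im² = (x-x_im)²+(y-y_im)², and y_r > w, the velocity vanishes identically on the wall: u_w(x, w) = 0 and v_w(x, w) = 0 for all x ∈ ℝ. -/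
/- On the wall the image point is the mirror image of the rotlet, so `r_im² = r²` there, the factor
`y - w` kills the wall-correction terms, and the two remaining terms of each component cancel. -/

theorem stmt_10_general (γ xr yr w : ℝ)
    (xim yim : ℝ) (hxim : xim = xr) (hyim : yim = 2 * w - yr)
    (uw vw : ℝ × ℝ → ℝ)
    (huw : ∀ p : ℝ × ℝ,
      uw p = γ * (-(p.2 - yr) / ((p.1 - xr) ^ 2 + (p.2 - yr) ^ 2)
        - (p.2 - yim) / ((p.1 - xim) ^ 2 + (p.2 - yim) ^ 2)
        - 2 * (p.2 - w) / ((p.1 - xim) ^ 2 + (p.2 - yim) ^ 2)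
        + 4 * (p.2 - w) * (p.2 - yim) ^ 2 /
            ((p.1 - xim) ^ 2 + (p.2 - yim) ^ 2) ^ 2))
    (hvw : ∀ p : ℝ × ℝ,
      vw p = γ * ((p.1 - xr) / ((p.1 - xr) ^ 2 + (p.2 - yr) ^ 2)
        - (p.1 - xr) / ((p.1 - xim) ^ 2 + (p.2 - yim) ^ 2)
        - 4 * (p.2 - w) * (p.1 - xim) * (p.2 - yim) /
            ((p.1 - xim) ^ 2 + (p.2 - yim) ^ 2) ^ 2)) :
    ∀ x : ℝ, uw (x, w) = 0 ∧ vw (x, w) = 0 := by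
  intro x
  have hy : w - yim = -(w - yr) := by rw [hyim]; ring
  have hr : (x - xim) ^ 2 + (w - yim) ^ 2 = (x - xr) ^ 2 + (w - yr) ^ 2 := by
    rw [hxim, hy, neg_sq]
  refine ⟨?_, ?_⟩
  · rw [huw, hr, hy, sub_self]
    ring
  · rw [hvw, hr, sub_self]
    ring

/-- The rotlet-above-a-wall velocity field vanishes identically on the wall
`{y = w}`. -/
theorem stmt_10 (γ xr yr w : ℝ) (hyr : yr > w)
    (xim yim : ℝ) (hxim : xim = xr) (hyim : yim = 2 * w - yr)
    (uw vw : ℝ × ℝ → ℝ)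
    (huw : ∀ p : ℝ × ℝ,
      uw p = γ * (-(p.2 - yr) / ((p.1 - xr) ^ 2 + (p.2 - yr) ^ 2)
        - (p.2 - yim) / ((p.1 - xim) ^ 2 + (p.2 - yim) ^ 2)
        - 2 * (p.2 - w) / ((p.1 - xim) ^ 2 + (p.2 - yim) ^ 2)
        + 4 * (p.2 - w) * (p.2 - yim) ^ 2 /
            ((p.1 - xim) ^ 2 + (p.2 - yim) ^ 2) ^ 2))
    (hvw : ∀ p : ℝ × ℝ,
      vw p = γ * ((p.1 - xr) / ((p.1 - xr) ^ 2 + (p.2 - yr) ^ 2)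
        - (p.1 - xr) / ((p.1 - xim) ^ 2 + (p.2 - yim) ^ 2)
        - 4 * (p.2 - w) * (p.1 - xim) * (p.2 - yim) /
            ((p.1 - xim) ^ 2 + (p.2 - yim) ^ 2) ^ 2)) :
    ∀ x : ℝ, uw (x, w) = 0 ∧ vw (x, w) = 0 :=
  stmt_10_general γ xr yr w xim yim hxim hyim uw vw huw hvw
end

section
/- For the circular-boundary rotlet stream function ψ_c(x) = γ(-log‖x - x_r‖ + log‖x - x_im‖ + log(R_r/a) - ½((R² - a²)/‖x - x_im‖²)(a²/R_r² - R²/a²)), where R = ‖x‖, R_r = ‖x_r‖, 0 < R_r < a, and x_im = (a²/R_r²) x_r, the stream function vanishes identically on the boundary circle: ψ_c(x) = 0 whenever ‖x‖ = a. -/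
/-- The circular-boundary rotlet stream function vanishes identically on the
boundary circle `‖x‖ = a`. -/
theorem stmt_14 (γ a : ℝ) (xr : EuclideanSpace ℝ (Fin 2))
    (hr : 0 < ‖xr‖) (hra : ‖xr‖ < a)
    (xim : EuclideanSpace ℝ (Fin 2)) (hxim : xim = (a ^ 2 / ‖xr‖ ^ 2) • xr)
    (ψc : EuclideanSpace ℝ (Fin 2) → ℝ)
    (hψ : ∀ x, ψc x = γ * (-Real.log ‖x - xr‖ + Real.log ‖x - xim‖
      + Real.log (‖xr‖ / a)
      - (1 / 2) * ((‖x‖ ^ 2 - a ^ 2) / ‖x - xim‖ ^ 2) *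
          (a ^ 2 / ‖xr‖ ^ 2 - ‖x‖ ^ 2 / a ^ 2))) :
    ∀ x : EuclideanSpace ℝ (Fin 2), ‖x‖ = a → ψc x = 0 := by
  intro x hx
  have ha : 0 < a := lt_trans hr hra
  have hrne : ‖xr‖ ≠ 0 := ne_of_gt hr
  have hane : a ≠ 0 := ne_of_gt ha
  have hxne : x ≠ xr := by
    intro h; rw [h] at hx; exact (ne_of_lt hra) hx
  have hsub : 0 < ‖x - xr‖ := by
    rw [norm_pos_iff, sub_ne_zero]; exact hxne
  -- key identity on squares
  have hsq : ‖x - xim‖ ^ 2 = (a / ‖xr‖) ^ 2 * ‖x - xr‖ ^ 2 := by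
    have h1 := @norm_sub_sq_real (EuclideanSpace ℝ (Fin 2)) _ _ x xim
    have h2 := @norm_sub_sq_real (EuclideanSpace ℝ (Fin 2)) _ _ x xr
    rw [h1, h2, hxim, inner_smul_right, norm_smul, Real.norm_eq_abs]
    have hax : |a ^ 2 / ‖xr‖ ^ 2| = a ^ 2 / ‖xr‖ ^ 2 := by
      rw [abs_of_nonneg]; positivity
    rw [hax, hx]
    field_simp
    ring
  have hkey : ‖x - xim‖ = (a / ‖xr‖) * ‖x - xr‖ := by
    have h0 : (0:ℝ) ≤ (a / ‖xr‖) * ‖x - xr‖ := by positivity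
    nlinarith [norm_nonneg (x - xim), sq_nonneg (‖x - xim‖ - (a / ‖xr‖) * ‖x - xr‖)]
  rw [hψ, hx, hkey]
  rw [Real.log_mul (by positivity) (ne_of_gt hsub), Real.log_div hrne hane,
    Real.log_div hane hrne]
  ring
end
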